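/- For the red coral model, the nontrivial fixed-point curve meets the trivial branch exactly at λ* = c₂/(c₁(b·a)): for a fixed point x = x₁·a with x₁ ≠ 0 the scalar fixed-point equation reduces (after dividing by x₁) to 1 = λ(b·a)φ((x₁/Ω)Σ_{k=2}^{13} p_k a_k), and in the limit x₁ → 0 this forces λ(b·a)φ(0) = 1, i.e., λ = λ*; equivalently, the corresponding basic reproduction number at the branch point is R* = (b·a)λ* = c₂/c₁ ≈ 72.22. -/
import Mathlib


noncomputable section

open Real Finset Matrix

namespace RedCoral

/-- Survival rates `S₁,…,S₁₂` (1-based index; all other indices map to 0). -/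
def Sr : ℕ → ℝ
  | 1 => 0.89
  | 2 => 0.63
  | 3 => 0.70
  | 4 => 0.52
  | 5 => 0.44
  | 6 => 0.29
  | 7 => 0.57
  | 8 => 0.33
  | 9 => 0.75
  | 10 => 1
  | 11 => 0.33
  | 12 => 1
  | _ => 0

/-- Fertility rates `F₁,…,F₁₃` (1-based index). -/
def Fert : ℕ → ℝ
  | 3 => 0.36
  | 4 => 0.64
  | 5 => 0.82
  | 6 => 0.97
  | 7 => 0.98
  | 8 => 0.99
  | 9 => 1
  | 10 => 1
  | 11 => 1
  | 12 => 1
  | 13 => 1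
  | _ => 0

/-- Birth rates `b_k = F_k k^{2.324}`. -/
def br (k : ℕ) : ℝ := Fert k * (k : ℝ) ^ (2.324 : ℝ)

/-- Polyps per colony `p_k = 1.239 k^{2.324}`. -/
def pr (k : ℕ) : ℝ := 1.239 * (k : ℝ) ^ (2.324 : ℝ)

def c1 : ℝ := 1.8e5
def c2 : ℝ := 1.3e7
def αr : ℝ := 5e-4
def βr : ℝ := 3.4e-3
def Ωr : ℝ := 36

/-- Recruit function `φ(y) = c₁ e^{-αy} / (y² + c₂ e^{-βy})`. -/
def φr (y : ℝ) : ℝ := c1 * Real.exp (-αr * y) / (y ^ 2 + c2 * Real.exp (-βr * y))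

/-- Polyp density `P(x) = (1/Ω) Σ_{k=2}^{13} p_k x_k` (0-based coordinates:
coordinate `i` is age group `i+1`). -/
def Pd (x : Fin 13 → ℝ) : ℝ :=
  (1 / Ωr) * ∑ i : Fin 13, if i.val = 0 then 0 else pr (i.val + 1) * x i

/-- The red coral model map `f : ℝ × ℝ¹³ → ℝ¹³`:
`f₁(λ,x) = λ φ(P(x)) Σ_k b_k x_k`, `f_{k+1}(λ,x) = S_k x_k`. -/
def fc (lam : ℝ) (x : Fin 13 → ℝ) : Fin 13 → ℝ := fun i =>
  if _h : i.val = 0 then lam * φr (Pd x) * ∑ j : Fin 13, br (j.val + 1) * x j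
  else Sr i.val * x ⟨i.val - 1, by have := i.isLt; omega⟩

/-- Cumulative survival `a₁ = 1`, `a_k = ∏_{i=1}^{k-1} S_i` (here `ar k` is the
1-based `a_{k+1}`, i.e. `ar k = ∏_{j=1}^{k} S_j`, so the 0-based coordinate `i`
carries `a_{i+1} = ar i`). -/
def ar (k : ℕ) : ℝ := ∏ j ∈ Finset.Icc 1 k, Sr j

/-- `b·a = Σ_{k=1}^{13} a_k b_k`. -/
def ba : ℝ := ∑ i : Fin 13, ar i.val * br (i.val + 1)

/-- `Σ_{k=2}^{13} p_k a_k`. -/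
def sumPA : ℝ := ∑ i : Fin 13, if i.val = 0 then 0 else pr (i.val + 1) * ar i.val

/-- The vector `a = (a₁,…,a₁₃)`. -/
def avec : Fin 13 → ℝ := fun i => ar i.val

/-- The Leslie matrix `D_x f(λ,0)`: first row `λ (c₁/c₂) b_j`, subdiagonal
`S₁,…,S₁₂`, all other entries zero. -/
def Jmat (lam : ℝ) : Matrix (Fin 13) (Fin 13) ℝ := Matrix.of fun i j =>
  if i.val = 0 then lam * (c1 / c2) * br (j.val + 1)
  else if j.val + 1 = i.val then Sr i.val else 0

lemma Sr_nonneg (j : ℕ) : 0 ≤ Sr j := by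
  unfold Sr; split <;> norm_num

lemma ar_nonneg (k : ℕ) : 0 ≤ ar k :=
  Finset.prod_nonneg fun j _ => Sr_nonneg j

lemma br_nonneg (k : ℕ) : 0 ≤ br k := by
  unfold br
  have : 0 ≤ Fert k := by unfold Fert; split <;> norm_num
  positivity

lemma ba_pos : 0 < ba := by
  unfold ba
  apply Finset.sum_pos' (fun i _ => mul_nonneg (ar_nonneg _) (br_nonneg _))
  refine ⟨⟨2, by norm_num⟩, Finset.mem_univ _, ?_⟩
  have h1 : ar 2 > 0 := by
    apply Finset.prod_pos
    intro j hj
    simp only [Finset.mem_Icc] at hj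
    obtain ⟨h1,h2⟩ := hj
    interval_cases j <;> norm_num [Sr]
  have h2 : br 3 > 0 := by
    unfold br Fert
    have : (0:ℝ) < (3:ℝ) ^ (2.324:ℝ) := Real.rpow_pos_of_pos (by norm_num) _
    norm_num
    positivity
  exact mul_pos h1 h2

lemma φr_zero : φr 0 = c1 / c2 := by
  simp [φr]

lemma φr_contAt : ContinuousAt φr 0 := by
  unfold φr
  apply ContinuousAt.div
  · fun_prop
  · fun_prop
  · norm_num [c2, Real.exp_zero]

/-- the nontrivial fixed-point curve meets the trivial branch
exactly at `λ* = c₂/(c₁(b·a))`: for `x₁ ≠ 0` the scalar fixed-point equation is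
equivalent (dividing by `x₁`) to `1 = λ(b·a)φ((x₁/Ω)Σ_{k=2}^{13} p_k a_k)`; in
the limit `x₁ → 0` this forces `λ(b·a)φ(0) = 1`, i.e. `λ = λ*`; equivalently
the basic reproduction number at the branch point is
`R* = (b·a)λ* = c₂/c₁ ≈ 72.22`. -/
theorem red_coral_branch_point :
    (∀ (lam x₁ : ℝ), x₁ ≠ 0 →
      (x₁ = lam * ba * x₁ * φr ((x₁ / Ωr) * sumPA) ↔
        1 = lam * ba * φr ((x₁ / Ωr) * sumPA))) ∧
    (∀ (lamn x1n : ℕ → ℝ) (lamInf : ℝ),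
      (∀ n, lamn n * ba * φr ((x1n n / Ωr) * sumPA) = 1) →
      Filter.Tendsto x1n Filter.atTop (nhds 0) →
      Filter.Tendsto lamn Filter.atTop (nhds lamInf) →
      lamInf = c2 / (c1 * ba)) ∧
    (c2 / (c1 * ba)) * ba * φr 0 = 1 ∧
    ba * (c2 / (c1 * ba)) = c2 / c1 ∧
    |c2 / c1 - 72.22| ≤ 0.01 := by
  have hba := ba_pos
  have hba' : ba ≠ 0 := ne_of_gt hba
  refine ⟨?_, ?_, ?_, ?_, ?_⟩
  · intro lam x₁ hx₁
    constructor
    · intro h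
      have h2 : x₁ * 1 = x₁ * (lam * ba * φr ((x₁ / Ωr) * sumPA)) := by
        rw [mul_one]; nth_rewrite 1 [h]; ring
      exact mul_left_cancel₀ hx₁ h2
    · intro h
      calc x₁ = x₁ * 1 := (mul_one x₁).symm
        _ = x₁ * (lam * ba * φr ((x₁ / Ωr) * sumPA)) := by rw [← h]
        _ = lam * ba * x₁ * φr ((x₁ / Ωr) * sumPA) := by ring
  · intro lamn x1n lamInf heq hx hl
    have h0 : Filter.Tendsto (fun n => (x1n n / Ωr) * sumPA) Filter.atTop (nhds 0) := by
      have := (hx.div_const Ωr).mul_const sumPA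
      simpa using this
    have hφ : Filter.Tendsto (fun n => φr ((x1n n / Ωr) * sumPA)) Filter.atTop
        (nhds (φr 0)) := φr_contAt.tendsto.comp h0
    have hT : Filter.Tendsto (fun n => lamn n * ba * φr ((x1n n / Ωr) * sumPA))
        Filter.atTop (nhds (lamInf * ba * φr 0)) := (hl.mul_const ba).mul hφ
    have hT1 : Filter.Tendsto (fun n => lamn n * ba * φr ((x1n n / Ωr) * sumPA))
        Filter.atTop (nhds 1) := by
      simpa [heq] using tendsto_const_nhds (α := ℕ) (f := Filter.atTop) (a := (1:ℝ))
    have hkey : lamInf * ba * φr 0 = 1 := tendsto_nhds_unique hT hT1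
    rw [φr_zero] at hkey
    have hc1 : c1 ≠ 0 := by norm_num [c1]
    have hc2 : c2 ≠ 0 := by norm_num [c2]
    field_simp at hkey ⊢
    linarith [hkey]
  · rw [φr_zero]
    have hc1 : c1 ≠ 0 := by norm_num [c1]
    have hc2 : c2 ≠ 0 := by norm_num [c2]
    field_simp
  · have hc1 : c1 ≠ 0 := by norm_num [c1]
    field_simp
  · rw [abs_le]
    norm_num [c1, c2]

end RedCoral
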